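/- arXiv:math/0305304 — 2 statements merged into one kernel-verified Lean document; each statement's English description precedes it below -/
import Mathlib

section
/- The cubic Dirac operator D^p ∈ U(g) ⊗ Cl(p) is invariant under the adjoint action of r, i.e., D^p commutes with ξ(x) for every x ∈ r: ξ(x)·D^p = D^p·ξ(x) in U(g) ⊗ Cl(p). -/
/-!
Write `ξ(x) = X ⊗ 1 + 1 ⊗ α(x)`. Commutators with `X` and with `α(x)` act on the generators coming
from `p` through `T = ad x|_p`, which is skew-adjoint for `B`. Since `B|_p` is nondegenerate (by
nondegeneracy of `B` and of `B|_r`), every vector of `p` expands in both dual bases, and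
skew-adjointness gives `Σ Φ(T p_ℓ, q_ℓ) = -Σ Φ(p_ℓ, T q_ℓ)` for every bilinear `Φ`.
With `Φ(u, v) = u ⊗ v` this makes `ξ(x)` commute with `Σ p_ℓ ⊗ q_ℓ`. Applied in each slot of the
cubic element, it moves `T` from the Clifford monomials onto the coefficients `B(q_l, [q_m, q_n])`,
where the three resulting terms cancel by invariance of `B` and the Jacobi identity; so `α(x)`
commutes with `γ_p`.
-/

open scoped TensorProduct
open LinearMap (BilinForm)

namespace LinearMap.BilinForm

section DualBasis

variable {R V ι : Type*} [CommRing R] [AddCommGroup V] [Module R V] [Fintype ι] [DecidableEq ι]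
  {β : BilinForm R V} {p : Module.Basis ι R V} {q : ι → V}

theorem basis_repr_eq_apply_dual (hpq : ∀ i j, β (p i) (q j) = if i = j then 1 else 0)
    (v : V) (i : ι) : p.repr v i = β v (q i) := by
  conv_rhs => rw [← p.sum_repr v]
  simp only [map_sum, map_smul, LinearMap.sum_apply, LinearMap.smul_apply, hpq, smul_eq_mul,
    mul_ite, mul_one, mul_zero, Finset.sum_ite_eq', Finset.mem_univ, if_true]

theorem sum_apply_dual_smul_basis (hpq : ∀ i j, β (p i) (q j) = if i = j then 1 else 0)
    (v : V) : ∑ i, β v (q i) • p i = v := by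
  simp_rw [← basis_repr_eq_apply_dual hpq, p.sum_repr]

theorem sum_basis_apply_smul_dual (hpq : ∀ i j, β (p i) (q j) = if i = j then 1 else 0)
    (hβ : β.SeparatingRight) (w : V) : ∑ i, β (p i) w • q i = w := by
  rw [← sub_eq_zero]
  refine hβ _ fun v => ?_
  have hv : β v = ∑ i, p.repr v i • β (p i) := by
    conv_lhs => rw [← p.sum_repr v]
    simp only [map_sum, map_smul]
  simp [hv, hpq]

theorem sum_apply_skewAdjoint_basis_dual {M : Type*} [AddCommGroup M] [Module R M]
    (hpq : ∀ i j, β (p i) (q j) = if i = j then 1 else 0) (hβ : β.SeparatingRight)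
    {T : V →ₗ[R] V} (hT : β.IsSkewAdjoint T) (Φ : V →ₗ[R] V →ₗ[R] M) :
    ∑ i, Φ (T (p i)) (q i) = -∑ i, Φ (p i) (T (q i)) := by
  have hleft (i : ι) : Φ (T (p i)) (q i) = ∑ j, β (T (p i)) (q j) • Φ (p j) (q i) := by
    conv_lhs => rw [← sum_apply_dual_smul_basis hpq (T (p i))]
    simp
  have hright (i : ι) : Φ (p i) (T (q i)) = ∑ j, β (p j) (T (q i)) • Φ (p i) (q j) := by
    conv_lhs => rw [← sum_basis_apply_smul_dual hpq hβ (T (q i))]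
    simp
  simp_rw [hleft, hright, hT _ _, Pi.neg_apply, map_neg, neg_smul]
  rw [Finset.sum_comm]
  simp [Finset.sum_neg_distrib]

variable {A : Type*} [Ring A] [Algebra R A]

theorem commute_add_tmul_sum_tmul {A' : Type*} [Ring A'] [Algebra R A']
    (hpq : ∀ i j, β (p i) (q j) = if i = j then 1 else 0) (hβ : β.SeparatingRight)
    {T : V →ₗ[R] V} (hT : β.IsSkewAdjoint T) (j : V →ₗ[R] A) (j' : V →ₗ[R] A') {a : A} {a' : A'}
    (ha : ∀ v, ⁅a, j v⁆ = j (T v)) (ha' : ∀ v, ⁅a', j' v⁆ = j' (T v)) :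
    Commute (a ⊗ₜ[R] 1 + 1 ⊗ₜ[R] a') (∑ i, j (p i) ⊗ₜ[R] j' (q i)) := by
  have hcomm (x : A) (x' : A') :
      (a ⊗ₜ[R] (1 : A') + 1 ⊗ₜ[R] a') * (x ⊗ₜ[R] x') - (x ⊗ₜ[R] x') * (a ⊗ₜ[R] 1 + 1 ⊗ₜ[R] a')
        = ⁅a, x⁆ ⊗ₜ[R] x' + x ⊗ₜ[R] ⁅a', x'⁆ := by
    simp only [Ring.lie_def, add_mul, mul_add, Algebra.TensorProduct.tmul_mul_tmul, one_mul,
      mul_one, TensorProduct.sub_tmul, TensorProduct.tmul_sub]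
    abel
  rw [commute_iff_lie_eq, Ring.lie_def, Finset.mul_sum, Finset.sum_mul, ← Finset.sum_sub_distrib]
  simp only [hcomm, ha, ha']
  rw [Finset.sum_add_distrib, add_eq_zero_iff_eq_neg]
  exact sum_apply_skewAdjoint_basis_dual hpq hβ hT ((TensorProduct.mk R A A').compl₁₂ j j')

theorem commute_sum_smul_mul_mul
    (hpq : ∀ i j, β (p i) (q j) = if i = j then 1 else 0) (hβ : β.SeparatingRight)
    {T : V →ₗ[R] V} (hT : β.IsSkewAdjoint T) (j : V →ₗ[R] A) {a : A}
    (ha : ∀ v, ⁅a, j v⁆ = j (T v)) (ω : V →ₗ[R] V →ₗ[R] V →ₗ[R] R)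
    (hω : ∀ u v w, ω (T u) v w + ω u (T v) w + ω u v (T w) = 0) :
    Commute a (∑ l, ∑ m, ∑ n, ω (q l) (q m) (q n) • (j (p l) * j (p m) * j (p n))) := by
  have hcomm (u v w : V) : a * (j u * j v * j w) - j u * j v * j w * a =
      j (T u) * j v * j w + j u * j (T v) * j w + j u * j v * j (T w) := by
    simp only [← ha, Ring.lie_def]
    noncomm_ring
  have slot₁ : ∑ l, ∑ m, ∑ n, ω (q l) (q m) (q n) • (j (T (p l)) * j (p m) * j (p n)) =
      -∑ l, ∑ m, ∑ n, ω (T (q l)) (q m) (q n) • (j (p l) * j (p m) * j (p n)) := by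
    refine sum_apply_skewAdjoint_basis_dual hpq hβ hT (LinearMap.mk₂ R
      (fun u v => ∑ m, ∑ n, ω v (q m) (q n) • (j u * j (p m) * j (p n))) ?_ ?_ ?_ ?_) <;>
    intros <;>
    simp [add_mul, add_smul, Finset.sum_add_distrib, Finset.smul_sum, smul_smul, mul_comm]
  have slot₂ : ∑ l, ∑ m, ∑ n, ω (q l) (q m) (q n) • (j (p l) * j (T (p m)) * j (p n)) =
      -∑ l, ∑ m, ∑ n, ω (q l) (T (q m)) (q n) • (j (p l) * j (p m) * j (p n)) := by
    rw [Finset.sum_comm]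
    conv_rhs => rw [Finset.sum_comm]
    refine sum_apply_skewAdjoint_basis_dual hpq hβ hT (LinearMap.mk₂ R
      (fun u v => ∑ l, ∑ n, ω (q l) v (q n) • (j (p l) * j u * j (p n))) ?_ ?_ ?_ ?_) <;>
    intros <;>
    simp [add_mul, mul_add, add_smul, Finset.sum_add_distrib, Finset.smul_sum, smul_smul, mul_comm]
  have slot₃ : ∑ l, ∑ m, ∑ n, ω (q l) (q m) (q n) • (j (p l) * j (p m) * j (T (p n))) =
      -∑ l, ∑ m, ∑ n, ω (q l) (q m) (T (q n)) • (j (p l) * j (p m) * j (p n)) := by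
    rw [Finset.sum_comm_cycle]
    conv_rhs => rw [Finset.sum_comm_cycle]
    refine sum_apply_skewAdjoint_basis_dual hpq hβ hT (LinearMap.mk₂ R
      (fun u v => ∑ l, ∑ m, ω (q l) (q m) v • (j (p l) * j (p m) * j u)) ?_ ?_ ?_ ?_) <;>
    intros <;>
    simp [mul_add, add_smul, Finset.sum_add_distrib, Finset.smul_sum, smul_smul, mul_comm]
  rw [commute_iff_lie_eq, Ring.lie_def]
  simp only [Finset.mul_sum, Finset.sum_mul, ← Finset.sum_sub_distrib, mul_smul_comm,
    smul_mul_assoc, ← smul_sub, hcomm, smul_add, Finset.sum_add_distrib, slot₁, slot₂, slot₃]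
  simp only [← Finset.sum_neg_distrib, ← Finset.sum_add_distrib, ← neg_smul, ← add_smul,
    ← neg_add, hω, neg_zero, zero_smul, Finset.sum_const_zero]

end DualBasis

section Lie

variable {R L : Type*} [CommRing R] [LieRing L] [LieAlgebra R L] {B : BilinForm R L}

theorem lieInvariant_of_apply_lie (h : ∀ x y z : L, B ⁅x, y⁆ z = B x ⁅y, z⁆) :
    B.lieInvariant L := fun x y z => by
  rw [← lie_skew, map_neg, LinearMap.neg_apply, h]

theorem lieInvariant.apply_lie_lie_add (hB : B.lieInvariant L) (x u v w : L) :
    B ⁅x, u⁆ ⁅v, w⁆ + B u ⁅⁅x, v⁆, w⁆ + B u ⁅v, ⁅x, w⁆⁆ = 0 := by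
  rw [hB, leibniz_lie, map_add]
  abel

variable (B) in
def bracketForm (P : Submodule R L) : P →ₗ[R] P →ₗ[R] P →ₗ[R] R :=
  ((((LinearMap.llcomp R L L R).comp B).compl₂
    (LieAlgebra.ad R L : L →ₗ[R] Module.End R L)).compl₁₂ P.subtype P.subtype).compr₂
    P.subtype.dualMap

@[simp]
theorem bracketForm_apply (P : Submodule R L) (u v w : P) :
    B.bracketForm P u v w = B u ⁅(v : L), (w : L)⁆ :=
  rfl

end Lie

theorem nondegenerate_restrict_orthogonal {K V : Type*} [Field K] [AddCommGroup V] [Module K V]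
    [FiniteDimensional K V] {B : BilinForm K V} (hB : B.Nondegenerate) (hB₀ : B.IsRefl)
    {W : Submodule K V} (hW : (B.restrict W).Nondegenerate) :
    (B.restrict (B.orthogonal W)).Nondegenerate :=
  nondegenerate_restrict_of_disjoint_orthogonal B hB₀ <| by
    rw [orthogonal_orthogonal hB hB₀]
    exact (isCompl_orthogonal_of_restrict_nondegenerate hB₀ hW).symm.disjoint

end LinearMap.BilinForm

variable {g : Type*} [LieRing g] [LieAlgebra ℂ g] [FiniteDimensional ℂ g]

attribute [local instance] LieRing.ofAssociativeRing

/-- The cubic Dirac operator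
`D^p = Σ_ℓ p_ℓ ⊗ q_ℓ - 1 ⊗ γ_p ∈ U(g) ⊗ Cl(p)` (with `γ_p` the cubic Cartan element,
expressed in the dual bases via the symbol identification as
`(1/6) Σ_{l,m,n} B(q_l,[q_m,q_n]) p_l p_m p_n`) is invariant under the adjoint action
of `r`: it commutes with `ξ(x)` for every `x ∈ r`. -/
theorem cubic_dirac_operator_r_invariant
    (B : BilinForm ℂ g)
    (hsymm : ∀ x y : g, B x y = B y x)
    (hinv : ∀ x y z : g, B ⁅x, y⁆ z = B x ⁅y, z⁆)
    (hnondeg : B.Nondegenerate)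
    (r : LieSubalgebra ℂ g)
    (hr : (B.restrict r.toSubmodule).Nondegenerate)
    (hstab : ∀ x ∈ r, ∀ y ∈ B.orthogonal r.toSubmodule,
      ⁅x, y⁆ ∈ B.orthogonal r.toSubmodule)
    (α : r →ₗ⁅ℂ⁆
        CliffordAlgebra (B.restrict (B.orthogonal r.toSubmodule)).toQuadraticMap)
    (hα : ∀ (x : r) (y : B.orthogonal r.toSubmodule),
      ⁅α x, CliffordAlgebra.ι (B.restrict (B.orthogonal r.toSubmodule)).toQuadraticMap y⁆ =
        CliffordAlgebra.ι (B.restrict (B.orthogonal r.toSubmodule)).toQuadraticMap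
          ⟨⁅(x : g), (y : g)⁆, hstab x x.2 y y.2⟩)
    (ξ : UniversalEnvelopingAlgebra ℂ r →ₐ[ℂ]
        UniversalEnvelopingAlgebra ℂ g ⊗[ℂ]
          CliffordAlgebra (B.restrict (B.orthogonal r.toSubmodule)).toQuadraticMap)
    (hξ : ∀ x : r, ξ (UniversalEnvelopingAlgebra.ι ℂ x)
      = (UniversalEnvelopingAlgebra.ι ℂ (x : g)) ⊗ₜ[ℂ] 1 + 1 ⊗ₜ[ℂ] α x)
    {ι : Type*} [Fintype ι] [DecidableEq ι]
    (p : Module.Basis ι ℂ (B.orthogonal r.toSubmodule)) (q : ι → (B.orthogonal r.toSubmodule))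
    (hpq : ∀ i j, B (p i : g) (q j : g) = if i = j then 1 else 0)
    (γp : CliffordAlgebra (B.restrict (B.orthogonal r.toSubmodule)).toQuadraticMap)
    (hγ : γp = (6⁻¹ : ℂ) • ∑ l, ∑ m, ∑ n,
      B (q l : g) ⁅(q m : g), (q n : g)⁆ •
        (CliffordAlgebra.ι (B.restrict (B.orthogonal r.toSubmodule)).toQuadraticMap (p l) *
         CliffordAlgebra.ι (B.restrict (B.orthogonal r.toSubmodule)).toQuadraticMap (p m) *
         CliffordAlgebra.ι (B.restrict (B.orthogonal r.toSubmodule)).toQuadraticMap (p n)))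
    (Dp : UniversalEnvelopingAlgebra ℂ g ⊗[ℂ]
        CliffordAlgebra (B.restrict (B.orthogonal r.toSubmodule)).toQuadraticMap)
    (hD : Dp = (∑ l, (UniversalEnvelopingAlgebra.ι ℂ (p l : g)) ⊗ₜ[ℂ]
        CliffordAlgebra.ι (B.restrict (B.orthogonal r.toSubmodule)).toQuadraticMap (q l))
      - 1 ⊗ₜ[ℂ] γp) :
    ∀ x : r, ξ (UniversalEnvelopingAlgebra.ι ℂ x) * Dp
      = Dp * ξ (UniversalEnvelopingAlgebra.ι ℂ x) := by
  intro x
  have hB : B.lieInvariant g := LinearMap.BilinForm.lieInvariant_of_apply_lie hinv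
  have hB₀ : B.IsRefl := fun u v h => hsymm u v ▸ h
  have hβ := (LinearMap.BilinForm.nondegenerate_restrict_orthogonal hnondeg hB₀ hr).2
  let T := (LieAlgebra.ad ℂ g x).restrict fun v hv => hstab x x.2 v hv
  have hT : (B.restrict _).IsSkewAdjoint T := fun u v =>
    (hB x u v).trans (map_neg (B u) _).symm
  have hαγ : Commute (α x) γp := by
    rw [hγ]
    exact (LinearMap.BilinForm.commute_sum_smul_mul_mul hpq hβ hT (CliffordAlgebra.ι _) (hα x)
      (B.bracketForm _) fun u v w => hB.apply_lie_lie_add x u v w).smul_right _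
  rw [hξ, hD]
  refine (LinearMap.BilinForm.commute_add_tmul_sum_tmul hpq hβ hT
    ((UniversalEnvelopingAlgebra.ι ℂ).toLinearMap ∘ₗ (B.orthogonal r.toSubmodule).subtype)
    (CliffordAlgebra.ι _) (fun v => (LieHom.map_lie _ _ _).symm) (hα x)).sub_right ?_
  exact ((Commute.one_right _).tmul (Commute.one_left _)).add_left
    ((Commute.one_left 1).tmul hαγ)
end

section
/- Suppose z ∈ Z(g), η(z) ∈ Z(r), and z ⊗ 1 - ξ(η(z)) = D^p a + a D^p for some a ∈ U(g) ⊗ Cl(p). Let V be a U(g)-module with central character χ (z·v = χ(z)v for all v ∈ V, z ∈ Z(g)) and S a Cl(p)-module. Then for every v₀ ∈ Ker D^p_V ⊆ V ⊗ S, the element χ(z)·v₀ - η(z)·v₀ lies in Im D^p_V ∩ Ker D^p_V; hence in the Dirac cohomology H_D(g,r;V), the action of z (via χ) agrees with the action of η(z) via ξ. -/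
open scoped TensorProduct
open LinearMap (BilinForm)

attribute [local instance 100] LieRing.ofAssociativeRing

variable {g : Type*} [LieRing g] [LieAlgebra ℂ g] [FiniteDimensional ℂ g]

/-!
On `V ⊗ S` the element `z ⊗ 1` acts by the scalar `χ z`, so the homotopy relation says that
`χ z - ξ(η z)` acts as `D a + a D`, which sends `Ker D` into `Im D`. Since `ξ(η z)` commutes with
`D`, it preserves `Ker D`, and so does the scalar `χ z`.
-/

namespace Module.End

variable {R M : Type*} [CommSemiring R] [AddCommMonoid M] [Module R M]

theorem apply_eq_of_eq_mul_add_mul {D K T : Module.End R M} (hT : T = D * K + K * D)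
    {w : M} (hw : D w = 0) : T w = D (K w) := by
  rw [hT, LinearMap.add_apply, mul_apply, mul_apply, hw, map_zero, add_zero]

theorem apply_apply_eq_zero_of_commute {D E : Module.End R M} (hDE : Commute D E)
    {w : M} (hw : D w = 0) : D (E w) = 0 := by
  rw [← mul_apply, hDE.eq, mul_apply, hw, map_zero]

end Module.End

section TensorAction

open TensorProduct

variable {R A C V S : Type*} [CommSemiring R] [Semiring A] [Algebra R A] [Semiring C]
  [Algebra R C] [AddCommMonoid V] [Module R V] [Module A V] [SMulCommClass A R V]
  [AddCommMonoid S] [Module R S] [Module C S] [SMulCommClass C R S]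
  {act : A ⊗[R] C →ₗ[R] Module.End R (V ⊗[R] S)}

theorem map_mul_of_apply_tmul_eq_map
    (hact : ∀ u c, act (u ⊗ₜ c) =
      map (Module.toModuleEnd R V u) (Module.toModuleEnd R S c))
    (x y : A ⊗[R] C) : act (x * y) = act x * act y := by
  induction x using TensorProduct.induction_on with
  | zero => simp
  | add x₁ x₂ h₁ h₂ => rw [add_mul, map_add, map_add, h₁, h₂, add_mul]
  | tmul u c =>
    induction y using TensorProduct.induction_on with
    | zero => simp
    | add y₁ y₂ h₁ h₂ => rw [mul_add, map_add, map_add, h₁, h₂, mul_add]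
    | tmul u' c' =>
      rw [Algebra.TensorProduct.tmul_mul_tmul, hact, hact, hact, map_mul, map_mul,
        TensorProduct.map_mul]

theorem apply_tmul_one_of_smul_eq
    (hact : ∀ u c, act (u ⊗ₜ c) =
      map (Module.toModuleEnd R V u) (Module.toModuleEnd R S c))
    {u : A} {χ : R} (hu : ∀ v : V, u • v = χ • v) (w : V ⊗[R] S) :
    act (u ⊗ₜ 1) w = χ • w := by
  have hscalar : Module.toModuleEnd R V u = χ • 1 := LinearMap.ext hu
  rw [hact, hscalar, map_one, TensorProduct.map_smul_left, TensorProduct.map_one,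
    LinearMap.smul_apply, Module.End.one_apply]

end TensorAction

theorem dirac_cohomology_central_character_general
    (B : BilinForm ℂ g)
    (r : LieSubalgebra ℂ g)
    (ξ : UniversalEnvelopingAlgebra ℂ r →ₐ[ℂ]
        UniversalEnvelopingAlgebra ℂ g ⊗[ℂ]
          CliffordAlgebra (B.restrict (B.orthogonal r.toSubmodule)).toQuadraticMap)
    -- the cubic Dirac operator
    (Dp : UniversalEnvelopingAlgebra ℂ g ⊗[ℂ]
        CliffordAlgebra (B.restrict (B.orthogonal r.toSubmodule)).toQuadraticMap)
    -- central elements and the homotopy relation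
    (z : Subalgebra.center ℂ (UniversalEnvelopingAlgebra ℂ g))
    (ηz : UniversalEnvelopingAlgebra ℂ r)
    (a : UniversalEnvelopingAlgebra ℂ g ⊗[ℂ]
        CliffordAlgebra (B.restrict (B.orthogonal r.toSubmodule)).toQuadraticMap)
    (hhomotopy : (z : UniversalEnvelopingAlgebra ℂ g) ⊗ₜ[ℂ] 1 - ξ ηz = Dp * a + a * Dp)
    (hcomm : Dp * ξ ηz = ξ ηz * Dp)
    -- the modules V and S
    (V : Type*) [AddCommGroup V] [Module ℂ V]
    [Module (UniversalEnvelopingAlgebra ℂ g) V]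
    [SMulCommClass (UniversalEnvelopingAlgebra ℂ g) ℂ V]
    (S : Type*) [AddCommGroup S] [Module ℂ S]
    [Module (CliffordAlgebra (B.restrict (B.orthogonal r.toSubmodule)).toQuadraticMap) S]
    [SMulCommClass
      (CliffordAlgebra (B.restrict (B.orthogonal r.toSubmodule)).toQuadraticMap) ℂ S]
    -- the central character of V
    (χ : Subalgebra.center ℂ (UniversalEnvelopingAlgebra ℂ g) → ℂ)
    (hχ : ∀ (z' : Subalgebra.center ℂ (UniversalEnvelopingAlgebra ℂ g)) (v : V),
      (z' : UniversalEnvelopingAlgebra ℂ g) • v = χ z' • v)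
    -- the action of `U(g) ⊗ Cl(p)` on `V ⊗ S` (componentwise on pure tensors)
    (actA : (UniversalEnvelopingAlgebra ℂ g ⊗[ℂ]
        CliffordAlgebra (B.restrict (B.orthogonal r.toSubmodule)).toQuadraticMap)
      →ₗ[ℂ] (V ⊗[ℂ] S →ₗ[ℂ] V ⊗[ℂ] S))
    (hactA : ∀ (u : UniversalEnvelopingAlgebra ℂ g)
        (c : CliffordAlgebra (B.restrict (B.orthogonal r.toSubmodule)).toQuadraticMap),
      actA (u ⊗ₜ[ℂ] c) = TensorProduct.map (DistribMulAction.toLinearMap ℂ V u)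
        (DistribMulAction.toLinearMap ℂ S c)) :
    ∀ w₀ : V ⊗[ℂ] S, actA Dp w₀ = 0 →
      χ z • w₀ - actA (ξ ηz) w₀ ∈ LinearMap.range (actA Dp) ∧
      χ z • w₀ - actA (ξ ηz) w₀ ∈ LinearMap.ker (actA Dp) := by
  intro w₀ hw₀
  have hmul := map_mul_of_apply_tmul_eq_map hactA
  have hz : actA ((z : UniversalEnvelopingAlgebra ℂ g) ⊗ₜ[ℂ] 1) w₀ = χ z • w₀ :=
    apply_tmul_one_of_smul_eq hactA (hχ z) w₀
  have hrange : χ z • w₀ - actA (ξ ηz) w₀ = actA Dp (actA a w₀) := by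
    rw [← hz, ← LinearMap.sub_apply, ← map_sub, hhomotopy]
    exact Module.End.apply_eq_of_eq_mul_add_mul (by rw [map_add, hmul, hmul]) hw₀
  have hDξ : Commute (actA Dp) (actA (ξ ηz)) := by
    rw [Commute, SemiconjBy, ← hmul, ← hmul, hcomm]
  have hker : actA Dp (actA (ξ ηz) w₀) = 0 :=
    Module.End.apply_apply_eq_zero_of_commute hDξ hw₀
  refine ⟨⟨actA a w₀, hrange.symm⟩, ?_⟩
  rw [LinearMap.mem_ker, map_sub, map_smul, hw₀, hker, smul_zero, sub_zero]

/-- Suppose `z ∈ Z(g)`, `η(z) ∈ Z(r)`, and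
`z ⊗ 1 - ξ(η(z)) = D^p a + a D^p` for some `a ∈ U(g) ⊗ Cl(p)`.  Let `V` be a
`U(g)`-module with central character `χ` and `S` a `Cl(p)`-module.  Then for every
`v₀ ∈ Ker D^p_V ⊆ V ⊗ S`, the element `χ(z)·v₀ - η(z)·v₀` lies in
`Im D^p_V ∩ Ker D^p_V`; hence in the Dirac cohomology the action of `z` (via `χ`)
agrees with the action of `η(z)` via `ξ`. -/
theorem dirac_cohomology_central_character
    (B : BilinForm ℂ g)
    (hsymm : ∀ x y : g, B x y = B y x)
    (hinv : ∀ x y z : g, B ⁅x, y⁆ z = B x ⁅y, z⁆)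
    (hnondeg : B.Nondegenerate)
    (r : LieSubalgebra ℂ g)
    (hr : (B.restrict r.toSubmodule).Nondegenerate)
    (hstab : ∀ x ∈ r, ∀ y ∈ B.orthogonal r.toSubmodule,
      ⁅x, y⁆ ∈ B.orthogonal r.toSubmodule)
    (α : r →ₗ⁅ℂ⁆
        CliffordAlgebra (B.restrict (B.orthogonal r.toSubmodule)).toQuadraticMap)
    (hα : ∀ (x : r) (y : B.orthogonal r.toSubmodule),
      ⁅α x, CliffordAlgebra.ι (B.restrict (B.orthogonal r.toSubmodule)).toQuadraticMap y⁆ =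
        CliffordAlgebra.ι (B.restrict (B.orthogonal r.toSubmodule)).toQuadraticMap
          ⟨⁅(x : g), (y : g)⁆, hstab x x.2 y y.2⟩)
    (ξ : UniversalEnvelopingAlgebra ℂ r →ₐ[ℂ]
        UniversalEnvelopingAlgebra ℂ g ⊗[ℂ]
          CliffordAlgebra (B.restrict (B.orthogonal r.toSubmodule)).toQuadraticMap)
    (hξ : ∀ x : r, ξ (UniversalEnvelopingAlgebra.ι ℂ x)
      = (UniversalEnvelopingAlgebra.ι ℂ (x : g)) ⊗ₜ[ℂ] 1 + 1 ⊗ₜ[ℂ] α x)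
    -- the cubic Dirac operator
    (Dp : UniversalEnvelopingAlgebra ℂ g ⊗[ℂ]
        CliffordAlgebra (B.restrict (B.orthogonal r.toSubmodule)).toQuadraticMap)
    {ι : Type*} [Fintype ι] [DecidableEq ι]
    (p : Module.Basis ι ℂ (B.orthogonal r.toSubmodule)) (q : ι → (B.orthogonal r.toSubmodule))
    (hpq : ∀ i j, B (p i : g) (q j : g) = if i = j then 1 else 0)
    (γp : CliffordAlgebra (B.restrict (B.orthogonal r.toSubmodule)).toQuadraticMap)
    (hγ : γp = (6⁻¹ : ℂ) • ∑ l, ∑ m, ∑ n,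
      B (q l : g) ⁅(q m : g), (q n : g)⁆ •
        (CliffordAlgebra.ι (B.restrict (B.orthogonal r.toSubmodule)).toQuadraticMap (p l) *
         CliffordAlgebra.ι (B.restrict (B.orthogonal r.toSubmodule)).toQuadraticMap (p m) *
         CliffordAlgebra.ι (B.restrict (B.orthogonal r.toSubmodule)).toQuadraticMap (p n)))
    (hD : Dp = (∑ l, (UniversalEnvelopingAlgebra.ι ℂ (p l : g)) ⊗ₜ[ℂ]
        CliffordAlgebra.ι (B.restrict (B.orthogonal r.toSubmodule)).toQuadraticMap (q l))
      - 1 ⊗ₜ[ℂ] γp)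
    -- central elements and the homotopy relation
    (z : Subalgebra.center ℂ (UniversalEnvelopingAlgebra ℂ g))
    (ηz : UniversalEnvelopingAlgebra ℂ r)
    (hηz : ηz ∈ Subalgebra.center ℂ (UniversalEnvelopingAlgebra ℂ r))
    (a : UniversalEnvelopingAlgebra ℂ g ⊗[ℂ]
        CliffordAlgebra (B.restrict (B.orthogonal r.toSubmodule)).toQuadraticMap)
    (hhomotopy : (z : UniversalEnvelopingAlgebra ℂ g) ⊗ₜ[ℂ] 1 - ξ ηz = Dp * a + a * Dp)
    (hcomm : Dp * ξ ηz = ξ ηz * Dp)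
    -- the modules V and S
    (V : Type*) [AddCommGroup V] [Module ℂ V]
    [Module (UniversalEnvelopingAlgebra ℂ g) V]
    [IsScalarTower ℂ (UniversalEnvelopingAlgebra ℂ g) V]
    [SMulCommClass (UniversalEnvelopingAlgebra ℂ g) ℂ V]
    (S : Type*) [AddCommGroup S] [Module ℂ S]
    [Module (CliffordAlgebra (B.restrict (B.orthogonal r.toSubmodule)).toQuadraticMap) S]
    [IsScalarTower ℂ
      (CliffordAlgebra (B.restrict (B.orthogonal r.toSubmodule)).toQuadraticMap) S]
    [SMulCommClass
      (CliffordAlgebra (B.restrict (B.orthogonal r.toSubmodule)).toQuadraticMap) ℂ S]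
    -- the central character of V
    (χ : Subalgebra.center ℂ (UniversalEnvelopingAlgebra ℂ g) → ℂ)
    (hχ : ∀ (z' : Subalgebra.center ℂ (UniversalEnvelopingAlgebra ℂ g)) (v : V),
      (z' : UniversalEnvelopingAlgebra ℂ g) • v = χ z' • v)
    -- the action of `U(g) ⊗ Cl(p)` on `V ⊗ S` (componentwise on pure tensors)
    (actA : (UniversalEnvelopingAlgebra ℂ g ⊗[ℂ]
        CliffordAlgebra (B.restrict (B.orthogonal r.toSubmodule)).toQuadraticMap)
      →ₗ[ℂ] (V ⊗[ℂ] S →ₗ[ℂ] V ⊗[ℂ] S))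
    (hactA : ∀ (u : UniversalEnvelopingAlgebra ℂ g)
        (c : CliffordAlgebra (B.restrict (B.orthogonal r.toSubmodule)).toQuadraticMap),
      actA (u ⊗ₜ[ℂ] c) = TensorProduct.map (DistribMulAction.toLinearMap ℂ V u)
        (DistribMulAction.toLinearMap ℂ S c)) :
    ∀ w₀ : V ⊗[ℂ] S, actA Dp w₀ = 0 →
      χ z • w₀ - actA (ξ ηz) w₀ ∈ LinearMap.range (actA Dp) ∧
      χ z • w₀ - actA (ξ ηz) w₀ ∈ LinearMap.ker (actA Dp) :=
  dirac_cohomology_central_character_general B r ξ Dp z ηz a hhomotopy hcomm V S χ hχ actA hactA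
end
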